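/- Let n ≥ 3 and r > 0. The function u(x) = (2r / (|x|² − r²))^((n−2)/2), defined on the exterior region {x ∈ ℝⁿ : |x| > r}, satisfies Δu = (n(n−2)/4) · u^((n+2)/(n−2)) on that region. -/

import Mathlib

open scoped RealInnerProductSpace

noncomputable def lap {n : ℕ} (f : EuclideanSpace ℝ (Fin n) → ℝ)
    (x : EuclideanSpace ℝ (Fin n)) : ℝ :=
  ∑ i, fderiv ℝ (fun y => fderiv ℝ f y (EuclideanSpace.single i 1)) x
      (EuclideanSpace.single i 1)

/-!
The function is `φ (‖y‖ ^ 2)` with `φ t = (2r / (t - r²)) ^ p`, `p = (n - 2) / 2`. For such a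
radial profile the chain rule gives `Δ = 2n φ'(s) + 4s φ''(s)` at `s = ‖x‖²`, and the family
`(c / (t - a)) ^ q` is closed under differentiation, with
`d/dt (c / (t - a)) ^ q = -(q / c) (c / (t - a)) ^ (q + 1)`.
Hence `Δu` is an explicit multiple of `(2r / (s - r²)) ^ (p + 2)`, and `p + 2 = p (n + 2) / (n - 2)`.
-/

open Filter Topology

theorem hasDerivAt_div_sub_rpow {a c q t : ℝ} (hc : 0 < c) (ht : a < t) :
    HasDerivAt (fun t => (c / (t - a)) ^ q) (-(q / c) * (c / (t - a)) ^ (q + 1)) t := by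
  have hta : 0 < t - a := sub_pos.2 ht
  have hu : 0 < c / (t - a) := div_pos hc hta
  have hinner : HasDerivAt (fun t => c / (t - a)) (-(c / (t - a) ^ 2)) t := by
    simpa [div_eq_mul_inv] using ((hasDerivAt_id t).sub_const a).inv hta.ne' |>.const_mul c
  refine ((Real.hasDerivAt_rpow_const (p := q) (Or.inl hu.ne')).comp t hinner).congr_deriv ?_
  rw [show q + 1 = (q - 1) + 2 by ring, Real.rpow_add hu, Real.rpow_two]
  field_simp

theorem hasFDerivAt_comp_norm_sq {n : ℕ} {φ : ℝ → ℝ} {d : ℝ} {x : EuclideanSpace ℝ (Fin n)}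
    (h : HasDerivAt φ d (‖x‖ ^ 2)) :
    HasFDerivAt (fun y : EuclideanSpace ℝ (Fin n) => φ (‖y‖ ^ 2)) (d • 2 • innerSL ℝ x) x :=
  h.comp_hasFDerivAt x (hasStrictFDerivAt_norm_sq x).hasFDerivAt

theorem lap_comp_norm_sq {n : ℕ} {φ φ' : ℝ → ℝ} {φ'' : ℝ} {x : EuclideanSpace ℝ (Fin n)}
    (hφ : ∀ᶠ t in 𝓝 (‖x‖ ^ 2), HasDerivAt φ (φ' t) t) (hφ' : HasDerivAt φ' φ'' (‖x‖ ^ 2)) :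
    lap (fun y => φ (‖y‖ ^ 2)) x = 2 * n * φ' (‖x‖ ^ 2) + 4 * ‖x‖ ^ 2 * φ'' := by
  have hnear : ∀ᶠ y in 𝓝 x, HasDerivAt φ (φ' (‖y‖ ^ 2)) (‖y‖ ^ 2) :=
    ((continuous_norm.pow 2).tendsto x).eventually hφ
  have hpartial : ∀ i : Fin n,
      fderiv ℝ (fun y => fderiv ℝ (fun y => φ (‖y‖ ^ 2)) y (EuclideanSpace.single i 1)) x
          (EuclideanSpace.single i 1) = 4 * φ'' * x i ^ 2 + 2 * φ' (‖x‖ ^ 2) := by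
    intro i
    have hfirst : (fun y => fderiv ℝ (fun y => φ (‖y‖ ^ 2)) y (EuclideanSpace.single i 1))
        =ᶠ[𝓝 x] fun y => φ' (‖y‖ ^ 2) * (2 * y i) := by
      filter_upwards [hnear] with y hy
      simp [(hasFDerivAt_comp_norm_sq hy).fderiv, EuclideanSpace.inner_single_right]
    have hcoord : HasFDerivAt (fun y : EuclideanSpace ℝ (Fin n) => 2 * y i)
        ((2 : ℝ) • EuclideanSpace.proj i) x :=
      (EuclideanSpace.proj i : EuclideanSpace ℝ (Fin n) →L[ℝ] ℝ).hasFDerivAt.const_mul (2 : ℝ)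
    have hprod : HasFDerivAt (fun y => φ' (‖y‖ ^ 2) * (2 * y i)) _ x :=
      (hasFDerivAt_comp_norm_sq hφ').mul hcoord
    rw [hfirst.fderiv_eq, hprod.fderiv]
    simp only [add_apply, smul_apply, PiLp.proj_apply,
      PiLp.single_eq_same, smul_eq_mul, mul_one, coe_innerSL_apply,
      EuclideanSpace.inner_single_right, Real.ringHom_apply, one_mul, nsmul_eq_mul, Nat.cast_ofNat]
    ring
  have hnorm : ∑ i, x i ^ 2 = ‖x‖ ^ 2 := by
    simp [EuclideanSpace.norm_eq, Real.sq_sqrt (Finset.sum_nonneg fun i _ => sq_nonneg (x i))]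
  rw [lap, Finset.sum_congr rfl fun i _ => hpartial i, Finset.sum_add_distrib, ← Finset.mul_sum,
    hnorm, Finset.sum_const, Finset.card_univ, Fintype.card_fin, nsmul_eq_mul]
  ring

theorem stmt_0_general (n : ℕ) (r : ℝ) (hr : 0 < r) :
    ∀ x : EuclideanSpace ℝ (Fin n), r < ‖x‖ →
      lap (fun y => (2 * r / (‖y‖ ^ 2 - r ^ 2)) ^ (((n : ℝ) - 2) / 2)) x =
        (n * (n - 2) / 4 : ℝ) *
          ((2 * r / (‖x‖ ^ 2 - r ^ 2)) ^ (((n : ℝ) - 2) / 2)) ^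
            (((n : ℝ) + 2) / ((n : ℝ) - 2)) := by
  intro x hx
  set p : ℝ := ((n : ℝ) - 2) / 2 with hp
  have hc : 0 < 2 * r := by positivity
  have hs : r ^ 2 < ‖x‖ ^ 2 := pow_lt_pow_left₀ hx hr.le two_ne_zero
  have hφ : ∀ᶠ t in 𝓝 (‖x‖ ^ 2), HasDerivAt (fun t => (2 * r / (t - r ^ 2)) ^ p)
      (-(p / (2 * r)) * (2 * r / (t - r ^ 2)) ^ (p + 1)) t :=
    (eventually_gt_nhds hs).mono fun t ht => hasDerivAt_div_sub_rpow hc ht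
  rw [lap_comp_norm_sq hφ ((hasDerivAt_div_sub_rpow hc hs).const_mul (-(p / (2 * r))))]
  set u := 2 * r / (‖x‖ ^ 2 - r ^ 2) with hu_def
  have hd : 0 < ‖x‖ ^ 2 - r ^ 2 := sub_pos.2 hs
  have hu : 0 < u := div_pos hc hd
  have hRHS : (n * (n - 2) / 4 : ℝ) * (u ^ p) ^ (((n : ℝ) + 2) / ((n : ℝ) - 2))
      = n * (n - 2) / 4 * (u ^ (p + 1) * u) := by
    rcases eq_or_ne (n : ℝ) 2 with h | h
    -- the exponent `(n + 2) / (n - 2)` is junk at `n = 2`, but the coefficient vanishes there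
    · simp [h]
    · rw [← Real.rpow_mul hu.le, ← Real.rpow_add_one hu.ne']
      congr 3
      field_simp
      ring
  rw [hRHS, Real.rpow_add_one hu.ne' (p + 1)]
  generalize u ^ (p + 1) = w
  rw [hu_def, hp]
  field_simp [hd.ne']
  ring

theorem stmt_0 (n : ℕ) (hn : 3 ≤ n) (r : ℝ) (hr : 0 < r) :
    ∀ x : EuclideanSpace ℝ (Fin n), r < ‖x‖ →
      lap (fun y => (2 * r / (‖y‖ ^ 2 - r ^ 2)) ^ (((n : ℝ) - 2) / 2)) x =
        (n * (n - 2) / 4 : ℝ) *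
          ((2 * r / (‖x‖ ^ 2 - r ^ 2)) ^ (((n : ℝ) - 2) / 2)) ^
            (((n : ℝ) + 2) / ((n : ℝ) - 2)) :=
  stmt_0_general n r hr
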